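/- arXiv:2403.04312 — 4 statements merged into one kernel-verified Lean document; each statement's English description precedes it below -/
import Mathlib

section
/- Let d ≥ 2 and let q ≡ 1 (mod d) be an odd prime power. Let d' > 1 be a divisor of d. Then gcd(d, (q^d−1)/(q^{d'}−1)) = d/d', and consequently a nonzero element x of the subfield F_{q^{d'}} is a d-th power in F_{q^d} if and only if x is a d'-th power in F_{q^{d'}}. -/
open Subgroup Submonoid

lemma auxCyclicPow {G : Type*} [Group G] [Fintype G] [IsCyclic G] (m : ℕ) (u : G) :
    (∃ y : G, y ^ m = u) ↔ u ^ (Fintype.card G / Nat.gcd m (Fintype.card G)) = 1 := by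
  classical
  set n := Fintype.card G with hn
  have hn0 : 0 < n := Fintype.card_pos
  obtain ⟨g, hg⟩ := IsCyclic.exists_generator (α := G)
  have hord : orderOf g = n := (orderOf_eq_card_of_forall_mem_zpowers hg).trans Nat.card_eq_fintype_card
  set c := Nat.gcd m n with hc
  have hc0 : 0 < c := Nat.gcd_pos_of_pos_right _ hn0
  have hcn : c ∣ n := Nat.gcd_dvd_right _ _
  have hcm : c ∣ m := Nat.gcd_dvd_left _ _
  obtain ⟨k, rfl⟩ : ∃ k : ℕ, g ^ k = u := by
    have := hg u
    rwa [← mem_powers_iff_mem_zpowers, Submonoid.mem_powers_iff] at this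
  have hRHS : (g ^ k) ^ (n / c) = 1 ↔ c ∣ k := by
    rw [← pow_mul, ← orderOf_dvd_iff_pow_eq_one, hord]
    constructor
    · intro h
      have h' : c * (n / c) ∣ k * (n / c) := by rwa [Nat.mul_div_cancel' hcn]
      exact (Nat.mul_dvd_mul_iff_right (Nat.div_pos (Nat.le_of_dvd hn0 hcn) hc0)).mp h'
    · rintro ⟨t, rfl⟩
      exact ⟨t, by rw [mul_comm c t, mul_assoc, Nat.mul_div_cancel' hcn, mul_comm]⟩
  rw [hRHS]
  constructor
  · rintro ⟨y, hy⟩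
    obtain ⟨j, rfl⟩ : ∃ j : ℕ, g ^ j = y := by
      have := hg y
      rwa [← mem_powers_iff_mem_zpowers, Submonoid.mem_powers_iff] at this
    rw [← pow_mul, pow_eq_pow_iff_modEq, hord] at hy
    have hdvd : (n : ℤ) ∣ (k : ℤ) - (j * m : ℕ) := hy.dvd
    have h1 : (c : ℤ) ∣ ((j * m : ℕ) : ℤ) := by
      exact_mod_cast Dvd.dvd.mul_left (Int.natCast_dvd_natCast.mpr hcm) j
    have h2 : (c : ℤ) ∣ (k : ℤ) - (j * m : ℕ) :=
      dvd_trans (Int.natCast_dvd_natCast.mpr hcn) hdvd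
    have : (c : ℤ) ∣ (k : ℤ) := by
      have := dvd_add h2 h1
      simpa using this
    exact_mod_cast this
  · rintro ⟨t, rfl⟩
    refine ⟨g ^ ((m.gcdA n) * t : ℤ), ?_⟩
    have hbez : (c : ℤ) = m * m.gcdA n + n * m.gcdB n := Nat.gcd_eq_gcd_ab m n
    rw [← zpow_natCast (g ^ _), ← zpow_mul]
    have : g ^ ((c * t : ℕ) : ℤ) = g ^ (m.gcdA n * t * m) := by
      rw [zpow_eq_zpow_iff_modEq, hord]
      refine Int.modEq_iff_dvd.mpr ⟨-(m.gcdB n * t), ?_⟩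
      push_cast
      rw [hbez]; ring
    rw [← this, zpow_natCast]

lemma auxFieldPow {F : Type*} [Field F] [Fintype F] (m : ℕ) (hm : 0 < m) (x : F) (hx : x ≠ 0) :
    (∃ y : F, y ^ m = x) ↔
      x ^ ((Fintype.card F - 1) / Nat.gcd m (Fintype.card F - 1)) = 1 := by
  classical
  have hcard : Fintype.card Fˣ = Fintype.card F - 1 := Fintype.card_units F
  have key := auxCyclicPow m (Units.mk0 x hx)
  rw [hcard] at key
  constructor
  · rintro ⟨y, rfl⟩
    have hy : y ≠ 0 := fun h => hx (by rw [h, zero_pow hm.ne'])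
    have : (Units.mk0 y hy) ^ m = Units.mk0 (y ^ m) hx := by
      ext; simp
    have h1 := key.mp ⟨Units.mk0 y hy, this⟩
    have := congrArg Units.val h1
    simpa using this
  · intro h
    have h1 : (Units.mk0 x hx) ^ ((Fintype.card F - 1) / Nat.gcd m (Fintype.card F - 1)) = 1 := by
      ext; simpa using h
    obtain ⟨u, hu⟩ := key.mpr h1
    exact ⟨u, by have := congrArg Units.val hu; simpa using this⟩

/-- Lemma 4.1: gcd(d, (q^d-1)/(q^{d'}-1)) = d/d', and a nonzero element of F_{q^{d'}} is a
d-th power in F_{q^d} iff it is a d'-th power in F_{q^{d'}}. -/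
theorem stmt8 (q d d' : ℕ) (hd : 2 ≤ d) (hq1 : q % d = 1) (hqodd : Odd q)
    (hq : ∃ p m : ℕ, p.Prime ∧ 0 < m ∧ q = p ^ m)
    (hd' : d' ∣ d) (hd'1 : 1 < d')
    (F' K : Type) [Field F'] [Field K] [Fintype F'] [Fintype K] [Algebra F' K]
    (hF' : Fintype.card F' = q ^ d') (hK : Fintype.card K = q ^ d) :
    Nat.gcd d ((q ^ d - 1) / (q ^ d' - 1)) = d / d' ∧
      ∀ x : F', x ≠ 0 →
        ((∃ y : K, y ^ d = algebraMap F' K x) ↔ ∃ y : F', y ^ d' = x) := by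
  classical
  -- basic bounds
  have hq2 : 2 ≤ q := by
    obtain ⟨p, m, hp, hm0, rfl⟩ := hq
    calc 2 ≤ p ^ 1 := by simpa using hp.two_le
    _ ≤ p ^ m := Nat.pow_le_pow_right hp.pos hm0
  have hd0 : 0 < d := by omega
  have hd'0 : 0 < d' := by omega
  set e := d / d' with hedef
  have he : d = d' * e := (Nat.mul_div_cancel' hd').symm
  have he0 : 0 < e := Nat.div_pos (Nat.le_of_dvd hd0 hd') hd'0
  -- d divides q - 1
  have hdq : d ∣ q - 1 := ⟨q / d, by have := Nat.div_add_mod q d; omega⟩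
  -- q^i ≡ 1 mod d
  have hq1d : q ≡ 1 [MOD d] := by
    show q % d = 1 % d
    rw [Nat.mod_eq_of_lt (show (1:ℕ) < d by omega)]
    exact hq1
  have hqi : ∀ i : ℕ, q ^ i ≡ 1 [MOD d] := fun i => by
    simpa using hq1d.pow i
  -- geometric sum
  set N := ∑ i ∈ Finset.range e, (q ^ d') ^ i with hNdef
  have hqd'1 : 1 < q ^ d' := Nat.one_lt_pow (by omega) (by omega)
  have hqd1 : 1 < q ^ d := Nat.one_lt_pow (by omega) (by omega)
  have keyZ : ((q : ℤ) ^ d' - 1) * (N : ℤ) = (q : ℤ) ^ d - 1 := by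
    rw [mul_comm, hNdef]
    push_cast
    rw [geom_sum_mul, ← pow_mul, ← he]
  have key : (q ^ d' - 1) * N = q ^ d - 1 := by
    zify [Nat.one_le_of_lt hqd'1, Nat.one_le_of_lt hqd1]
    exact keyZ
  have hquot : (q ^ d - 1) / (q ^ d' - 1) = N := by
    rw [← key, Nat.mul_div_cancel_left _ (by omega)]
  -- N mod d
  have hNmod : N % d = e % d := by
    rw [hNdef, Finset.sum_nat_mod]
    have : ∀ i ∈ Finset.range e, (q ^ d') ^ i % d = 1 := by
      intro i _
      have := hqi (d' * i)
      rw [← pow_mul]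
      have h1 : (1 : ℕ) % d = 1 := Nat.mod_eq_of_lt (by omega)
      calc q ^ (d' * i) % d = 1 % d := this
      _ = 1 := h1
    rw [Finset.sum_congr rfl this]
    simp
  -- part 1
  have hedvdd : e ∣ d := ⟨d', by rw [he, mul_comm]⟩
  have part1 : Nat.gcd d N = e := by
    rw [Nat.gcd_rec d N, hNmod, ← Nat.gcd_rec d e]
    exact Nat.gcd_eq_right hedvdd
  refine ⟨by rw [hquot]; exact part1, ?_⟩
  -- part 2 setup
  have heN : e ∣ N := part1 ▸ Nat.gcd_dvd_right d N
  set M := N / e with hMdef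
  have hNM : N = e * M := (Nat.mul_div_cancel' heN).symm
  have hgcdM : Nat.gcd d' M = 1 := by
    have h1 : Nat.gcd (d' * e) (M * e) = Nat.gcd d' M * e := Nat.gcd_mul_right d' e M
    rw [← he, mul_comm M e, ← hNM, part1] at h1
    have := Nat.eq_of_mul_eq_mul_right he0 (h1.symm.trans (one_mul e).symm)
    exact this
  set A := q ^ d' - 1 with hAdef
  have hd'A : d' ∣ A := dvd_trans (dvd_trans hd' hdq) (by simpa using Nat.sub_dvd_pow_sub_pow q 1 d')
  set B := A / d' with hBdef
  have hAB : A = d' * B := (Nat.mul_div_cancel' hd'A).symm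
  have hdn : d ∣ q ^ d - 1 :=
    (Nat.modEq_iff_dvd' (le_of_lt hqd1)).mp (hqi d).symm
  have hnBM : (q ^ d - 1) / d = B * M := by
    have : q ^ d - 1 = d * (B * M) := by
      rw [← key, hAB, hNM, he]; ring
    rw [this, Nat.mul_div_cancel_left _ hd0]
  -- part 2
  intro x hx
  have hix : algebraMap F' K x ≠ 0 := by
    simpa using (map_ne_zero (algebraMap F' K)).mpr hx
  have hinj : Function.Injective (algebraMap F' K) := (algebraMap F' K).injective
  rw [auxFieldPow d (by omega) _ hix, auxFieldPow d' (by omega) x hx, hK, hF']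
  rw [Nat.gcd_eq_left hdn, Nat.gcd_eq_left hd'A]
  have hmapiff : (algebraMap F' K x) ^ ((q ^ d - 1) / d) = 1 ↔ x ^ ((q ^ d - 1) / d) = 1 := by
    rw [← map_pow, ← map_one (algebraMap F' K)]
    exact ⟨fun h => hinj h, fun h => by rw [h]⟩
  rw [hmapiff, hnBM]
  constructor
  · intro h
    have hxA : x ^ A = 1 := by
      have := FiniteField.pow_card_sub_one_eq_one x hx
      rwa [hF'] at this
    have h1 : orderOf x ∣ B * M := orderOf_dvd_of_pow_eq_one h
    have h2 : orderOf x ∣ B * d' := by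
      rw [mul_comm, ← hAB]
      exact orderOf_dvd_of_pow_eq_one hxA
    have h3 : orderOf x ∣ Nat.gcd (B * M) (B * d') := Nat.dvd_gcd h1 h2
    rw [Nat.gcd_mul_left, Nat.gcd_comm M d', hgcdM, mul_one] at h3
    exact orderOf_dvd_iff_pow_eq_one.mp h3
  · intro h
    have hB : x ^ B = 1 := h
    rw [pow_mul, hB, one_pow]
end

section
/- Let m, d ≥ 2 be integers with rad(m) dividing rad(d), and let r be the smallest prime divisor of m. Then there exist a positive integer k and integers d_1, d_2, …, d_k, each at least r, such that d_1·d_2···d_k = m and d_1 | d_2 | ⋯ | d_k | d. -/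
/-- Lemma 4.3: if rad(m) ∣ rad(d) and r is the smallest prime divisor of m, then m factors
as d₁⋯d_k with each dᵢ ≥ r and d₁ ∣ d₂ ∣ ⋯ ∣ d_k ∣ d. -/
theorem stmt9 (m d : ℕ) (hm : 2 ≤ m) (hd : 2 ≤ d)
    (hrad : ∀ p : ℕ, p.Prime → p ∣ m → p ∣ d) :
    ∃ k : ℕ, 0 < k ∧ ∃ ds : Fin k → ℕ,
      (∀ i, m.minFac ≤ ds i) ∧ (∏ i, ds i) = m ∧
      (∀ i j : Fin k, i ≤ j → ds i ∣ ds j) ∧ (∀ i, ds i ∣ d) := by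
  have hm0 : m ≠ 0 := by omega
  set S := m.primeFactors with hS
  have hSne : S.Nonempty := Nat.nonempty_primeFactors.mpr hm
  set f := m.factorization with hf
  set k := S.sup f with hk
  obtain ⟨q, hqS, hq⟩ := Finset.exists_mem_eq_sup S hSne f
  have hq1 : 1 ≤ f q := by
    have := (Nat.Prime.factorization_pos_of_dvd (Nat.prime_of_mem_primeFactors hqS) hm0
      (Nat.dvd_of_mem_primeFactors hqS))
    exact this
  have hk1 : 0 < k := by simp only [hk, hq]; omega
  refine ⟨k, hk1, fun i => ∏ p ∈ S.filter (fun p => k - i.val ≤ f p), p, ?_, ?_, ?_, ?_⟩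
  · intro i
    have hqmem : q ∈ S.filter (fun p => k - i.val ≤ f p) := by
      refine Finset.mem_filter.mpr ⟨hqS, ?_⟩
      rw [← hq]; omega
    have hpos : 0 < ∏ p ∈ S.filter (fun p => k - i.val ≤ f p), p := by
      refine Finset.prod_pos fun p hp => ?_
      exact (Nat.prime_of_mem_primeFactors (Finset.mem_filter.mp hp).1).pos
    calc m.minFac ≤ q := Nat.minFac_le_of_dvd
          (Nat.prime_of_mem_primeFactors hqS).two_le (Nat.dvd_of_mem_primeFactors hqS)
      _ ≤ _ := Nat.le_of_dvd hpos (Finset.dvd_prod_of_mem _ hqmem)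
  · -- product equals m
    have step : ∀ i : Fin k, (∏ p ∈ S.filter (fun p => k - i.val ≤ f p), p)
        = ∏ p ∈ S, if k - i.val ≤ f p then p else 1 := fun i => Finset.prod_filter _ _
    simp only [step]
    rw [Finset.prod_comm]
    have : ∀ p ∈ S, (∏ i : Fin k, if k - i.val ≤ f p then p else 1) = p ^ f p := by
      intro p hp
      have hfle : f p ≤ k := Finset.le_sup hp
      have h1 : ∀ i : Fin k, (k - i.val ≤ f p) ↔ (k - f p ≤ i.val) := by
        intro i; omega
      calc (∏ i : Fin k, if k - i.val ≤ f p then p else 1)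
          = ∏ i ∈ Finset.univ.filter (fun i : Fin k => k - f p ≤ i.val), p := by
            rw [Finset.prod_filter]; exact Finset.prod_congr rfl fun i _ => if_congr (h1 i) rfl rfl
        _ = p ^ (Finset.univ.filter (fun i : Fin k => k - f p ≤ i.val)).card :=
            Finset.prod_const p
        _ = p ^ f p := by
            congr 1
            have : (Finset.univ.filter fun i : Fin k => k - f p ≤ i.val) =
                (Finset.Ico (k - f p) k).attachFin
                  (fun x hx => (Finset.mem_Ico.mp hx).2) := by
              ext i
              simp [Finset.mem_attachFin, Finset.mem_Ico, i.isLt]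
            rw [this, Finset.card_attachFin, Nat.card_Ico]
            omega
    rw [Finset.prod_congr rfl this]
    have := Nat.factorization_prod_pow_eq_self hm0
    rwa [Finsupp.prod, Nat.support_factorization] at this
  · intro i j hij
    refine Finset.prod_dvd_prod_of_subset _ _ _ (Finset.monotone_filter_right S ?_)
    intro p hp
    have : (i : ℕ) ≤ j := hij
    omega
  · intro i
    refine Finset.prod_primes_dvd d ?_ ?_
    · intro p hp
      exact (Nat.prime_of_mem_primeFactors (Finset.mem_filter.mp hp).1).prime
    · intro p hp
      have hp' := Finset.mem_filter.mp hp
      exact hrad p (Nat.prime_of_mem_primeFactors hp'.1) (Nat.dvd_of_mem_primeFactors hp'.1)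
end

section
/- Let q ≡ 3 (mod 4) be a prime power and let u ∈ F_{q^2} \ F_q. Write u = x + yα with x, y ∈ F_q, y ≠ 0, where α ∈ F_{q^2} satisfies α^2 = β for a non-square β ∈ F_q^*. Then u − u^q = 2yα, and u − u^q is a d-th power in F_{q^2} (for d dividing q+1) if and only if α is a d-th power in F_{q^2}, which holds if and only if d divides (q+1)/2. -/
/-- Criterion for being a `d`-th power in a finite field. -/
lemma dpow_crit {K : Type} [Field K] [Fintype K] {d : ℕ} (hd0 : 0 < d)
    (hdvd : d ∣ Fintype.card K - 1) {a : K} (ha : a ≠ 0) :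
    (∃ w : K, w ^ d = a) ↔ a ^ ((Fintype.card K - 1) / d) = 1 := by
  classical
  set N := Fintype.card K - 1 with hN
  have hNd : d * (N / d) = N := Nat.mul_div_cancel' hdvd
  constructor
  · rintro ⟨w, rfl⟩
    have hw : w ≠ 0 := by rintro rfl; simp [zero_pow hd0.ne'] at ha
    rw [← pow_mul, hNd]
    exact FiniteField.pow_card_sub_one_eq_one w hw
  · intro h
    obtain ⟨g, hg⟩ := IsCyclic.exists_generator (α := Kˣ)
    set au : Kˣ := Units.mk0 a ha with hau
    obtain ⟨n, hn⟩ : au ∈ Submonoid.powers g := by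
      rw [mem_powers_iff_mem_zpowers]; apply hg
    have hgord : orderOf g = N := by
      rw [orderOf_eq_card_of_forall_mem_zpowers hg, Nat.card_eq_fintype_card,
        Fintype.card_units, hN]
    have hau1 : au ^ (N / d) = 1 := by
      apply Units.ext
      push_cast [hau]
      exact h
    have hn' : g ^ n = au := hn
    have hdvd2 : orderOf g ∣ n * (N / d) := by
      apply orderOf_dvd_of_pow_eq_one
      rw [pow_mul, hn', hau1]
    rw [hgord] at hdvd2
    have hdvd2' : d * (N / d) ∣ n * (N / d) := by rw [hNd]; exact hdvd2
    have hNdpos : 0 < N / d := by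
      have hN2 : 0 < N := by
        have := Fintype.one_lt_card (α := K)
        omega
      exact Nat.div_pos (Nat.le_of_dvd hN2 hdvd) hd0
    obtain ⟨mm, hmm⟩ := Nat.dvd_of_mul_dvd_mul_right hNdpos hdvd2'
    refine ⟨((g ^ mm : Kˣ) : K), ?_⟩
    have : (g ^ mm) ^ d = au := by
      rw [← hn', ← pow_mul, mul_comm mm d, ← hmm]
    calc ((g ^ mm : Kˣ) : K) ^ d = (((g ^ mm) ^ d : Kˣ) : K) := by push_cast; ring
      _ = a := by rw [this]; rfl

/-- For u = x + yα ∈ F_{q^2} \ F_q with α² = β a nonsquare of F_q: u - u^q = 2yα, and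
u - u^q is a d-th power in F_{q^2} iff α is, iff d ∣ (q+1)/2. -/
theorem stmt10 (q d : ℕ) (hq4 : q % 4 = 3)
    (hqpp : ∃ p m : ℕ, p.Prime ∧ 0 < m ∧ q = p ^ m)
    (hd : d ∣ q + 1) (hd0 : 0 < d)
    (F K : Type) [Field F] [Field K] [Fintype F] [Fintype K] [Algebra F K]
    (hF : Fintype.card F = q) (hK : Fintype.card K = q ^ 2)
    (β : F) (hβ0 : β ≠ 0) (hβ : ¬ ∃ s : F, s ^ 2 = β)
    (α : K) (hα : α ^ 2 = algebraMap F K β)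
    (x y : F) (hy : y ≠ 0) (u : K)
    (hu : u = algebraMap F K x + algebraMap F K y * α) :
    u - u ^ q = 2 * algebraMap F K y * α ∧
    ((∃ w : K, w ^ d = u - u ^ q) ↔ ∃ w : K, w ^ d = α) ∧
    ((∃ w : K, w ^ d = α) ↔ d ∣ (q + 1) / 2) := by
  obtain ⟨p, m, hp, hm, hqpm⟩ := hqpp
  haveI : Fact p.Prime := ⟨hp⟩
  obtain ⟨k, hk⟩ := hd
  -- basic arithmetic facts
  have hq3 : 3 ≤ q := by
    have := Nat.mod_le q 4
    omega
  have hq2 : q % 2 = 1 := by omega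
  have hk0 : 0 < k := by
    rcases Nat.eq_zero_or_pos k with h | h
    · subst h; omega
    · exact h
  -- characteristic of K is p
  have hcardK : Fintype.card K = p ^ (2 * m) := by
    rw [hK, hqpm, ← pow_mul, mul_comm]
  have hringK : ringChar K = p := by
    have h1 : p ∣ ringChar K := by
      rw [prime_dvd_char_iff_dvd_card, hcardK]
      exact dvd_pow_self p (by omega)
    have h2 : (ringChar K).Prime := CharP.char_is_prime K (ringChar K)
    exact ((Nat.prime_dvd_prime_iff_eq hp h2).mp h1).symm
  haveI hcharK : CharP K p := hringK ▸ ringChar.charP K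
  -- p is odd
  have hp2 : 2 < p := by
    have hge := hp.two_le
    by_contra h
    have hpe : p = 2 := by omega
    have h2q : 2 ∣ q := by
      rw [hqpm, hpe]
      exact dvd_pow_self 2 hm.ne'
    omega
  -- Frobenius facts
  have hfrobF : ∀ a : F, (algebraMap F K a) ^ q = algebraMap F K a := by
    intro a
    rw [← map_pow]
    congr 1
    have := FiniteField.pow_card a
    rwa [hF] at this
  have hchar2 : ringChar F ≠ 2 := by
    intro h
    have := FiniteField.even_card_of_char_two h
    rw [hF] at this
    omega
  -- β is a nonsquare, so β ^ (q/2) = -1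
  have hβpow : β ^ (q / 2) = -1 := by
    rcases FiniteField.pow_dichotomy hchar2 hβ0 with h | h
    · exfalso
      have := (FiniteField.isSquare_iff hchar2 hβ0).mpr h
      obtain ⟨r, hr⟩ := this
      exact hβ ⟨r, by rw [sq]; exact hr.symm⟩
    · rwa [hF] at h
  have hα0 : α ≠ 0 := by
    intro h
    apply hβ0
    have : algebraMap F K β = 0 := by rw [← hα, h]; ring
    exact (map_eq_zero _).mp this
  have hαq : α ^ q = -α := by
    have hqe : q = 2 * (q / 2) + 1 := by omega
    calc α ^ q = (α ^ 2) ^ (q / 2) * α := by rw [← pow_mul, ← pow_succ, ← hqe]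
      _ = algebraMap F K (β ^ (q / 2)) * α := by rw [hα, map_pow]
      _ = -α := by rw [hβpow, map_neg, map_one]; ring
  have hαq1 : α ^ (q - 1) = -1 := by
    have : α ^ (q - 1) * α = -1 * α := by
      rw [← pow_succ, Nat.sub_add_cancel (by omega), hαq]; ring
    exact mul_right_cancel₀ hα0 this
  -- compute u - u^q
  have huq : u ^ q = algebraMap F K x - algebraMap F K y * α := by
    have hhom : (algebraMap F K x + algebraMap F K y * α) ^ q
        = (algebraMap F K x) ^ q + (algebraMap F K y * α) ^ q := by
      rw [hqpm]; exact add_pow_char_pow ..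
    rw [hu, hhom, mul_pow, hfrobF, hfrobF, hαq]
    ring
  have hdiff : u - u ^ q = 2 * algebraMap F K y * α := by
    rw [huq, hu]; ring
  -- d-th power criteria setup
  have hKcard : Fintype.card K - 1 = (q + 1) * (q - 1) := by
    rw [hK]
    have := Nat.sq_sub_sq q 1
    simpa using this
  have hdvdK : d ∣ Fintype.card K - 1 := by
    rw [hKcard]
    exact dvd_mul_of_dvd_left ⟨k, hk⟩ _
  have hKexp : (Fintype.card K - 1) / d = (q - 1) * k := by
    rw [hKcard, hk, show d * k * (q - 1) = d * ((q - 1) * k) by ring,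
      Nat.mul_div_cancel_left _ hd0]
  -- α is a d-th power iff (-1)^k = 1 iff k is even
  have hneg1 : (-1 : K) ≠ 1 := by
    apply Ring.neg_one_ne_one_of_char_ne_two
    rw [hringK]; omega
  have hαcrit : (∃ w : K, w ^ d = α) ↔ Even k := by
    rw [dpow_crit hd0 hdvdK hα0, hKexp, pow_mul, hαq1]
    exact neg_one_pow_eq_one_iff_even hneg1
  -- 2y is a d-th power in K
  have h2y0 : (2 : F) * y ≠ 0 := mul_ne_zero (Ring.two_ne_zero hchar2) hy
  have hc0 : algebraMap F K (2 * y) ≠ 0 := by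
    rw [map_ne_zero]; exact h2y0
  have hcpow : ∃ w0 : K, w0 ^ d = algebraMap F K (2 * y) := by
    rw [dpow_crit hd0 hdvdK hc0, hKexp, pow_mul, ← map_pow]
    have h1 : ((2 : F) * y) ^ (q - 1) = 1 := by
      have := FiniteField.pow_card_sub_one_eq_one _ h2y0
      rwa [hF] at this
    rw [h1, map_one, one_pow]
  obtain ⟨w0, hw0⟩ := hcpow
  have hw00 : w0 ≠ 0 := by
    rintro rfl
    rw [zero_pow hd0.ne'] at hw0
    exact hc0 hw0.symm
  refine ⟨hdiff, ?_, ?_⟩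
  · -- u - u^q = (2y) * α is a d-th power iff α is
    have hrw : u - u ^ q = algebraMap F K (2 * y) * α := by
      have h2 : (algebraMap F K) (2 : F) = 2 := map_ofNat _ 2
      rw [hdiff, map_mul, h2]
    rw [hrw]
    constructor
    · rintro ⟨w, hw⟩
      refine ⟨w / w0, ?_⟩
      rw [div_pow, hw, hw0, mul_comm, mul_div_assoc, div_self hc0, mul_one]
    · rintro ⟨w, hw⟩
      exact ⟨w0 * w, by rw [mul_pow, hw, hw0]⟩
  · -- α is a d-th power iff d ∣ (q+1)/2
    rw [hαcrit]
    constructor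
    · rintro ⟨mm, hmm⟩
      refine ⟨mm, ?_⟩
      have h2 : q + 1 = 2 * (d * mm) := by rw [hk, hmm]; ring
      set t := d * mm
      omega
    · rintro ⟨mm, hmm⟩
      have h2 : d * k = 2 * (d * mm) := by
        rw [← hk]
        have : q + 1 = 2 * ((q + 1) / 2) := by omega
        rw [this, hmm]
      have : k = 2 * mm := by
        apply Nat.eq_of_mul_eq_mul_left hd0
        rw [h2]; ring
      exact ⟨mm, by omega⟩
end

section
/- Let q be an odd prime power with 4 | q+1 (i.e., q ≡ 3 (mod 4)). In the quadratic extension F_{q^2}, the subfield F_q forms a clique in the 4-Paley graph GP(q^2, 4): every nonzero element of F_q is a fourth power in F_{q^2}. -/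
/-- If q ≡ 3 (mod 4), every nonzero element of F_q is a fourth power in F_{q^2}, i.e.,
the subfield F_q forms a clique in GP(q², 4). -/
theorem stmt14 (q : ℕ) (hq : q % 4 = 3)
    (F K : Type) [Field F] [Field K] [Fintype F] [Fintype K] [Algebra F K]
    (hF : Fintype.card F = q) (hK : Fintype.card K = q ^ 2)
    (x : F) (hx : x ≠ 0) :
    ∃ y : K, y ^ 4 = algebraMap F K x := by
  classical
  have hq2 : 2 ≤ q := by omega
  have hxK : algebraMap F K x ≠ 0 := by
    simpa using (map_ne_zero (algebraMap F K)).mpr hx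
  set a : Kˣ := Units.mk0 (algebraMap F K x) hxK with ha
  obtain ⟨g, hg⟩ := IsCyclic.exists_generator (α := Kˣ)
  obtain ⟨k, hk⟩ := (isOfFinOrder_of_finite g).mem_powers_iff_mem_zpowers.mpr (hg a)
  have hk' : g ^ k = a := hk
  have hxpow : x ^ (q - 1) = 1 := by
    subst hF
    exact FiniteField.pow_card_sub_one_eq_one x hx
  have hapow : a ^ (q - 1) = 1 := by
    rw [Units.ext_iff, Units.val_pow_eq_pow_val]
    simp only [ha, Units.val_mk0, Units.val_one, ← map_pow, hxpow, map_one]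
  have hord : orderOf g = q ^ 2 - 1 := by
    rw [orderOf_eq_card_of_forall_mem_zpowers hg, Nat.card_eq_fintype_card,
      Fintype.card_units, hK]
  have hdvd : q ^ 2 - 1 ∣ k * (q - 1) := by
    rw [← hord]
    apply orderOf_dvd_of_pow_eq_one
    rw [pow_mul, hk', hapow]
  have hfac : q ^ 2 - 1 = (q - 1) * (q + 1) := by
    obtain ⟨r, rfl⟩ : ∃ r, q = r + 2 := ⟨q - 2, by omega⟩
    show (r + 2) ^ 2 - 1 = (r + 1) * (r + 3)
    have h1 : (r + 2) ^ 2 = (r + 1) * (r + 3) + 1 := by ring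
    rw [h1, Nat.add_sub_cancel]
  have hq1 : q + 1 ∣ k := by
    rw [hfac, mul_comm k (q - 1)] at hdvd
    have h1 : 0 < q - 1 := by omega
    exact (Nat.mul_dvd_mul_iff_left h1).mp hdvd
  have h4 : 4 ∣ k := dvd_trans (by omega) hq1
  obtain ⟨m, rfl⟩ := h4
  refine ⟨(g : K) ^ m, ?_⟩
  have hv : ((g ^ (4 * m) : Kˣ) : K) = algebraMap F K x := by rw [hk']; rfl
  rw [← hv]
  push_cast
  ring
end
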